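/- arXiv:1811.06583 — 3 statements merged into one kernel-verified Lean document; each statement's English description precedes it below -/
import Mathlib

section
/- Let D = ∂_t + y'∂_y + y''∂_{y'} + ((3/2)(y'')²/y' - (y')³R(y))∂_{y''} be the total derivative vector field associated to the Schwarzian equation S(y) + (y')²R(y) = 0, and let X, H, Y be the sl₂ vector fields X = ∂_t, H = t∂_t - y'∂_{y'} - 2y''∂_{y''}, Y = (t²/2)∂_t - ty'∂_{y'} - (2ty''+y')∂_{y''}. Then [D,X] = 0, [D,H] = D, and [D,Y] = t·D. -/
set_option maxHeartbeats 1000000 in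
/-- Let `D = ∂_t + y'∂_y + y''∂_{y'} + ((3/2)(y'')²/y' - (y')³R(y))∂_{y''}` be the total
derivative vector field of the Schwarzian equation `S(y) + (y')²R(y) = 0`, and let
`X = ∂_t`, `H = t∂_t - y'∂_{y'} - 2y''∂_{y''}`,
`Y = (t²/2)∂_t - ty'∂_{y'} - (2ty''+y')∂_{y''}` be the `sl₂` vector fields.
Then `[D,X] = 0`, `[D,H] = D` and `[D,Y] = t·D`.  The ambient localized polynomial
algebra is modeled abstractly by a field `F` with commuting coordinate derivations
`∂_t, ∂_y, ∂_{y'}, ∂_{y''}`; `r` stands for `R(y)`, a function of `y` alone. -/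
theorem stmt5 {F : Type*} [Field F] [CharZero F]
    (Dt Dy Dy1 Dy2 : Derivation ℚ F F) (t y y1 y2 r : F) (hy1 : y1 ≠ 0)
    (hDtt : Dt t = 1) (hDty : Dt y = 0) (hDty1 : Dt y1 = 0) (hDty2 : Dt y2 = 0)
    (hDyt : Dy t = 0) (hDyy : Dy y = 1) (hDyy1 : Dy y1 = 0) (hDyy2 : Dy y2 = 0)
    (hD1t : Dy1 t = 0) (hD1y : Dy1 y = 0) (hD1y1 : Dy1 y1 = 1) (hD1y2 : Dy1 y2 = 0)
    (hD2t : Dy2 t = 0) (hD2y : Dy2 y = 0) (hD2y1 : Dy2 y1 = 0) (hD2y2 : Dy2 y2 = 1)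
    (hcty : ∀ p, Dt (Dy p) = Dy (Dt p))
    (hct1 : ∀ p, Dt (Dy1 p) = Dy1 (Dt p))
    (hct2 : ∀ p, Dt (Dy2 p) = Dy2 (Dt p))
    (hcy1 : ∀ p, Dy (Dy1 p) = Dy1 (Dy p))
    (hcy2 : ∀ p, Dy (Dy2 p) = Dy2 (Dy p))
    (hc12 : ∀ p, Dy1 (Dy2 p) = Dy2 (Dy1 p))
    (hrt : Dt r = 0) (hr1 : Dy1 r = 0) (hr2 : Dy2 r = 0) :
    let D : F → F := fun p =>
      Dt p + y1 * Dy p + y2 * Dy1 p + ((3 / 2) * y2 ^ 2 / y1 - y1 ^ 3 * r) * Dy2 p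
    let X : F → F := fun p => Dt p
    let H : F → F := fun p => t * Dt p - y1 * Dy1 p - 2 * y2 * Dy2 p
    let Y : F → F := fun p =>
      t ^ 2 / 2 * Dt p - t * y1 * Dy1 p - (2 * t * y2 + y1) * Dy2 p
    (∀ p, D (X p) - X (D p) = 0) ∧
      (∀ p, D (H p) - H (D p) = D p) ∧
      (∀ p, D (Y p) - Y (D p) = t * D p) := by
  have hq : ∀ (Dd : Derivation ℚ F F) (q : ℚ), Dd (q : F) = 0 := fun Dd q => by
    simpa using Dd.map_algebraMap q
  have h2' : ∀ Dd : Derivation ℚ F F, Dd (2 : F) = 0 := fun Dd => by simpa using hq Dd 2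
  have h3' : ∀ Dd : Derivation ℚ F F, Dd (3 : F) = 0 := fun Dd => by simpa using hq Dd 3
  have hAt : Dt ((3 / 2) * y2 ^ 2 / y1 - y1 ^ 3 * r) = 0 := by
    simp [Derivation.leibniz_div, Derivation.leibniz, Derivation.leibniz_pow,
      hDtt, hDty1, hDty2, hrt, h2' Dt, h3' Dt]
  have hA1 : Dy1 ((3 / 2) * y2 ^ 2 / y1 - y1 ^ 3 * r) =
      -(3 / 2) * y2 ^ 2 / y1 ^ 2 - 3 * y1 ^ 2 * r := by
    simp only [map_sub, Derivation.leibniz_div, Derivation.leibniz, Derivation.leibniz_pow,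
      hD1y1, hD1y2, hr1, h2' Dy1, h3' Dy1, smul_eq_mul, nsmul_eq_mul]
    field_simp
    ring
  have hA2 : Dy2 ((3 / 2) * y2 ^ 2 / y1 - y1 ^ 3 * r) = 3 * y2 / y1 := by
    simp only [map_sub, Derivation.leibniz_div, Derivation.leibniz, Derivation.leibniz_pow,
      hD2y1, hD2y2, hr2, h2' Dy2, h3' Dy2, smul_eq_mul, nsmul_eq_mul]
    field_simp
    ring
  intro D X H Y
  have hBt : Dt (t ^ 2 / 2) = t := by
    simp [Derivation.leibniz_div, Derivation.leibniz_pow, hDtt, h2' Dt]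
    ring
  have hBy : Dy (t ^ 2 / 2) = 0 := by
    simp [Derivation.leibniz_div, Derivation.leibniz_pow, hDyt, h2' Dy]
  have hB1 : Dy1 (t ^ 2 / 2) = 0 := by
    simp [Derivation.leibniz_div, Derivation.leibniz_pow, hD1t, h2' Dy1]
  have hB2 : Dy2 (t ^ 2 / 2) = 0 := by
    simp [Derivation.leibniz_div, Derivation.leibniz_pow, hD2t, h2' Dy2]
  refine ⟨fun p => ?_, fun p => ?_, fun p => ?_⟩
  · simp only [D, X, H, Y]
    have h1 : y1 * Dy1 ((3 / 2) * y2 ^ 2 / y1 - y1 ^ 3 * r)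
        = -((3 / 2) * y2 ^ 2 / y1 - y1 ^ 3 * r) - 4 * y1 ^ 3 * r := by
      rw [hA1]; field_simp; ring
    have h2 : y1 * Dy2 ((3 / 2) * y2 ^ 2 / y1 - y1 ^ 3 * r) = 3 * y2 := by
      rw [hA2]; field_simp
    have h3 : y1 * ((3 / 2) * y2 ^ 2 / y1 - y1 ^ 3 * r) = 3 / 2 * y2 ^ 2 - y1 ^ 4 * r := by
      field_simp
    have hAt' := hAt
    generalize hcg : (3 / 2) * y2 ^ 2 / y1 - y1 ^ 3 * r = c at h1 h2 h3 hAt' ⊢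
    simp only [map_add, map_sub, Derivation.leibniz, smul_eq_mul,
      hDtt, hDty, hDty1, hDty2, hDyt, hDyy, hDyy1, hDyy2,
      hD1t, hD1y, hD1y1, hD1y2, hD2t, hD2y, hD2y1, hD2y2,
      hAt', hBt, hBy, hB1, hB2, h2' Dt, h2' Dy, h2' Dy1, h2' Dy2,
      hcty, hct1, hct2, hcy1, hcy2, hc12]
    rw [← mul_right_inj' hy1]
    ring
  · simp only [D, X, H, Y]
    have h1 : y1 * Dy1 ((3 / 2) * y2 ^ 2 / y1 - y1 ^ 3 * r)
        = -((3 / 2) * y2 ^ 2 / y1 - y1 ^ 3 * r) - 4 * y1 ^ 3 * r := by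
      rw [hA1]; field_simp; ring
    have h2 : y1 * Dy2 ((3 / 2) * y2 ^ 2 / y1 - y1 ^ 3 * r) = 3 * y2 := by
      rw [hA2]; field_simp
    have h3 : y1 * ((3 / 2) * y2 ^ 2 / y1 - y1 ^ 3 * r) = 3 / 2 * y2 ^ 2 - y1 ^ 4 * r := by
      field_simp
    have hAt' := hAt
    generalize hcg : (3 / 2) * y2 ^ 2 / y1 - y1 ^ 3 * r = c at h1 h2 h3 hAt' ⊢
    simp only [map_add, map_sub, Derivation.leibniz, smul_eq_mul,
      hDtt, hDty, hDty1, hDty2, hDyt, hDyy, hDyy1, hDyy2,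
      hD1t, hD1y, hD1y1, hD1y2, hD2t, hD2y, hD2y1, hD2y2,
      hAt', hBt, hBy, hB1, hB2, h2' Dt, h2' Dy, h2' Dy1, h2' Dy2,
      hcty, hct1, hct2, hcy1, hcy2, hc12]
    rw [← mul_right_inj' hy1]
    linear_combination (y1 * Dy2 p) * h1 + (2 * y2 * Dy2 p) * h2 - (4 * Dy2 p) * h3
  · simp only [D, X, H, Y]
    have h1 : y1 * Dy1 ((3 / 2) * y2 ^ 2 / y1 - y1 ^ 3 * r)
        = -((3 / 2) * y2 ^ 2 / y1 - y1 ^ 3 * r) - 4 * y1 ^ 3 * r := by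
      rw [hA1]; field_simp; ring
    have h2 : y1 * Dy2 ((3 / 2) * y2 ^ 2 / y1 - y1 ^ 3 * r) = 3 * y2 := by
      rw [hA2]; field_simp
    have h3 : y1 * ((3 / 2) * y2 ^ 2 / y1 - y1 ^ 3 * r) = 3 / 2 * y2 ^ 2 - y1 ^ 4 * r := by
      field_simp
    have hAt' := hAt
    generalize hcg : (3 / 2) * y2 ^ 2 / y1 - y1 ^ 3 * r = c at h1 h2 h3 hAt' ⊢
    simp only [map_add, map_sub, Derivation.leibniz, smul_eq_mul,
      hDtt, hDty, hDty1, hDty2, hDyt, hDyy, hDyy1, hDyy2,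
      hD1t, hD1y, hD1y1, hD1y2, hD2t, hD2y, hD2y1, hD2y2,
      hAt', hBt, hBy, hB1, hB2, h2' Dt, h2' Dy, h2' Dy1, h2' Dy2,
      hcty, hct1, hct2, hcy1, hcy2, hc12]
    rw [← mul_right_inj' hy1]
    linear_combination (t * y1 * Dy2 p) * h1 + (2 * t * y2 * Dy2 p + y1 * Dy2 p) * h2 -
      (4 * t * Dy2 p) * h3
end

section
/- Let G₁ and G₂ be subgroups of a group G. If G₁ is contained in the commensurator Comm(G₂) of G₂, G₂ ⊆ Comm(G₁), G₁ has finite index in Comm(G₁), and G₂ has finite index in Comm(G₂), then G₁ and G₂ are commensurable (G₁ ∩ G₂ has finite index in both). -/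
open Subgroup.Commensurable

/-- If `G₁ ⊆ Comm(G₂)`, `G₂ ⊆ Comm(G₁)`, `G₁` has finite index in `Comm(G₁)` and `G₂`
has finite index in `Comm(G₂)`, then `G₁` and `G₂` are commensurable. -/
theorem stmt13 {G : Type*} [Group G] (G₁ G₂ : Subgroup G)
    (h12 : G₁ ≤ commensurator G₂) (h21 : G₂ ≤ commensurator G₁)
    (h1 : G₁.relIndex (commensurator G₁) ≠ 0)
    (h2 : G₂.relIndex (commensurator G₂) ≠ 0) :
    Subgroup.Commensurable G₁ G₂ := by
  constructor
  · exact fun h => h1 (Subgroup.relIndex_eq_zero_of_le_right h21 h)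
  · exact fun h => h2 (Subgroup.relIndex_eq_zero_of_le_right h12 h)
end

section
/- Let A_λ (λ ranging over a set of rationals bounded above, with denominators bounded) be Puiseux series coefficients, elements of an algebraic closure of ℂ(t, y₁, y₁'), each independent of t, and suppose a ∈ ℂ, a ≠ 0, and the family satisfies: A_λ = 0 for λ > 0, A₀ does not depend on y₁', and for all k ∈ ℕ, (a/2)·∂A_{-k-1}/∂y₁' = k·A_{-k}/y₁'. Then A_{-k} = 0 for all k ≥ 1. (Key step: the derivative with respect to y₁' of a function algebraic over ℂ(y₁, y₁') cannot have a simple pole at y₁' = 0.) -/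
open Polynomial

noncomputable def stmt19D {k : Type*} [Field k] (r : RatFunc k) : RatFunc k :=
  (algebraMap (Polynomial k) (RatFunc k) (derivative r.num)
      * algebraMap (Polynomial k) (RatFunc k) r.denom
    - algebraMap (Polynomial k) (RatFunc k) r.num
      * algebraMap (Polynomial k) (RatFunc k) (derivative r.denom))
    / (algebraMap (Polynomial k) (RatFunc k) r.denom) ^ 2

lemma stmt19D_one {k : Type*} [Field k] : stmt19D (1 : RatFunc k) = 0 := by
  simp [stmt19D, RatFunc.num_one, RatFunc.denom_one]

lemma stmt19_noLog {k : Type*} [Field k] [CharZero k] (r : RatFunc k) (c : k) (hc : c ≠ 0) :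
    RatFunc.X * stmt19D r ≠ RatFunc.C c := by
  intro h
  have hq : r.denom ≠ 0 := r.denom_ne_zero
  have hψq : algebraMap (Polynomial k) (RatFunc k) r.denom ≠ 0 :=
    RatFunc.algebraMap_ne_zero hq
  -- turn into a polynomial identity
  have h2 : algebraMap (Polynomial k) (RatFunc k)
      (X * (derivative r.num * r.denom - r.num * derivative r.denom))
      = algebraMap (Polynomial k) (RatFunc k) (C c * r.denom ^ 2) := by
    rw [stmt19D, ← RatFunc.algebraMap_X (K := k), ← RatFunc.algebraMap_C (K := k)] at h
    field_simp at h
    push_cast [map_mul, map_sub, map_pow, RatFunc.algebraMap_X, RatFunc.algebraMap_C]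
    simp only [RatFunc.algebraMap_X, RatFunc.algebraMap_C] at h
    linear_combination h
  have hpoly : (X : Polynomial k) * (derivative r.num * r.denom - r.num * derivative r.denom)
      = C c * r.denom ^ 2 := RatFunc.algebraMap_injective k h2
  -- root multiplicity of the denominator at 0
  set β := r.denom.rootMultiplicity 0 with hβ
  have hfact := Polynomial.pow_mul_divByMonic_rootMultiplicity_eq r.denom 0
  set s := r.denom /ₘ (X - C 0) ^ β with hs
  have hs0 : s.eval 0 ≠ 0 := Polynomial.eval_divByMonic_pow_rootMultiplicity_ne_zero 0 hq
  rw [C_0, sub_zero, ← hβ] at hfact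
  cases' hβv : β with b
  · -- no pole : evaluate at 0
    rw [hβv, pow_zero, one_mul] at hfact
    have := congrArg (Polynomial.eval 0) hpoly
    simp only [eval_mul, eval_sub, eval_X, eval_C, eval_pow, zero_mul] at this
    rw [← hfact] at this
    exact hc (by
      have := this.symm
      have h0 : c * s.eval 0 ^ 2 = 0 := by simpa using this
      rcases mul_eq_zero.mp h0 with h | h
      · exact h
      · exact absurd (pow_eq_zero_iff (n := 2) (by norm_num) |>.mp h) hs0)
  · -- pole of order b+1
    rw [hβv] at hfact
    have hXq : (X : Polynomial k) ∣ r.denom := by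
      refine ⟨X ^ b * s, ?_⟩
      rw [← hfact]; ring
    have hp0 : r.num.eval 0 ≠ 0 := by
      intro h0
      have hXp : (X : Polynomial k) ∣ r.num := by
        rw [Polynomial.X_dvd_iff, Polynomial.coeff_zero_eq_eval_zero]; exact h0
      exact (Polynomial.prime_X (R := k)).not_unit
        ((r.isCoprime_num_denom).isUnit_of_dvd' hXp hXq)
    have hds : derivative (X ^ (b + 1) * s)
        = C ((b : k) + 1) * X ^ b * s + X ^ (b + 1) * derivative s := by
      rw [derivative_mul, derivative_X_pow]
      push_cast
      simp [Nat.add_sub_cancel]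
    rw [← hfact] at hpoly
    rw [hds] at hpoly
    have hXne : (X : Polynomial k) ^ (b + 1) ≠ 0 := pow_ne_zero _ Polynomial.X_ne_zero
    have hcancel : X * derivative r.num * s - C ((b : k) + 1) * r.num * s
          - X * r.num * derivative s
        = C c * X ^ (b + 1) * s ^ 2 := by
      apply mul_left_cancel₀ hXne
      linear_combination hpoly
    have := congrArg (Polynomial.eval 0) hcancel
    simp only [eval_mul, eval_sub, eval_add, eval_X, eval_C, eval_pow, zero_mul, mul_zero,
      zero_sub, zero_pow (Nat.succ_ne_zero b)] at this
    have : ((b : k) + 1) * (r.num.eval 0 * s.eval 0) = 0 := by linear_combination -this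
    rcases mul_eq_zero.mp this with h | h
    · have : ((b : k) + 1) ≠ 0 := by
        have : ((b + 1 : ℕ) : k) ≠ 0 := Nat.cast_ne_zero.mpr (Nat.succ_ne_zero b)
        simpa using this
      exact this h
    · rcases mul_eq_zero.mp h with h | h
      · exact hp0 h
      · exact hs0 h

section

variable {k F : Type*} [Field k] [Field F] [CharZero F] [Algebra (RatFunc k) F]
  (δ : Derivation ℚ F F)
  (hδX : δ (algebraMap (RatFunc k) F RatFunc.X) = 1)
  (hδC : ∀ c : k, δ (algebraMap (RatFunc k) F (RatFunc.C c)) = 0)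

include hδX hδC

lemma stmt19_polyd (q : Polynomial k) :
    δ (algebraMap (RatFunc k) F (algebraMap (Polynomial k) (RatFunc k) q))
      = algebraMap (RatFunc k) F (algebraMap (Polynomial k) (RatFunc k) (derivative q)) := by
  induction q using Polynomial.induction_on with
  | C a => simp [RatFunc.algebraMap_C, hδC]
  | add p q hp hq => simp [map_add, hp, hq]
  | monomial n a ih =>
    have hsplit : (C a * X ^ (n + 1) : Polynomial k) = (C a * X ^ n) * X := by ring
    have hder : derivative (C a * X ^ (n + 1) : Polynomial k)
        = derivative (C a * X ^ n) * X + C a * X ^ n := by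
      cases n with
      | zero => simp
      | succ m =>
        rw [derivative_C_mul, derivative_C_mul, derivative_X_pow, derivative_X_pow]
        push_cast [Nat.add_sub_cancel]
        simp only [C_add, C_1, Polynomial.C_eq_natCast, map_ofNat]
        ring
    rw [hder, hsplit,
      map_mul (algebraMap (Polynomial k) (RatFunc k)) (C a * X ^ n) X,
      map_mul (algebraMap (RatFunc k) F), Derivation.leibniz, ih, RatFunc.algebraMap_X, hδX,
      map_add (algebraMap (Polynomial k) (RatFunc k)),
      map_mul (algebraMap (Polynomial k) (RatFunc k)) (derivative (C a * X ^ n)) X,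
      map_add (algebraMap (RatFunc k) F),
      map_mul (algebraMap (RatFunc k) F), RatFunc.algebraMap_X]
    simp only [smul_eq_mul, mul_one]
    ring

lemma stmt19_E (r : RatFunc k) :
    δ (algebraMap (RatFunc k) F r) = algebraMap (RatFunc k) F (stmt19D r) := by
  set ψ := algebraMap (Polynomial k) (RatFunc k)
  set u := algebraMap (RatFunc k) F
  have hq : ψ r.denom ≠ 0 := RatFunc.algebraMap_ne_zero r.denom_ne_zero
  have huq : u (ψ r.denom) ≠ 0 := by
    intro h0
    exact hq ((map_eq_zero_iff u (RingHom.injective _)).mp h0)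
  have hr : u r * u (ψ r.denom) = u (ψ r.num) := by
    rw [← map_mul]
    exact congrArg u ((div_eq_iff hq).mp r.num_div_denom).symm
  have hδr := congrArg δ hr
  rw [Derivation.leibniz, stmt19_polyd δ hδX hδC, stmt19_polyd δ hδX hδC] at hδr
  simp only [smul_eq_mul] at hδr
  have hz : δ (u r) = (u (ψ (derivative r.num)) - u r * u (ψ (derivative r.denom))) / u (ψ r.denom) := by
    field_simp
    linear_combination hδr
  rw [hz, stmt19D]
  push_cast [map_div₀, map_sub, map_mul, map_pow]
  rw [div_eq_div_iff huq (pow_ne_zero 2 huq)]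
  linear_combination (- u (ψ (derivative r.denom)) * u (ψ r.denom)) * hr

end

lemma stmt19_nologF {k F : Type*} [Field k] [CharZero k] [Field F] [CharZero F]
    [Algebra (RatFunc k) F] (halg : Algebra.IsAlgebraic (RatFunc k) F)
    (δ : Derivation ℚ F F)
    (hδX : δ (algebraMap (RatFunc k) F RatFunc.X) = 1)
    (hδC : ∀ c : k, δ (algebraMap (RatFunc k) F (RatFunc.C c)) = 0)
    (g : F) (hg : δ g = (algebraMap (RatFunc k) F RatFunc.X)⁻¹) : False := by
  classical
  set u := algebraMap (RatFunc k) F with hu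
  have huinj : Function.Injective u := RingHom.injective _
  have hXF : u RatFunc.X ≠ 0 := fun h0 =>
    RatFunc.X_ne_zero (huinj (by simpa using h0))
  have hint : IsIntegral (RatFunc k) g := (Algebra.IsAlgebraic.isAlgebraic g).isIntegral
  set p := minpoly (RatFunc k) g with hp
  have hpmon : p.Monic := minpoly.monic hint
  have hpne : p ≠ 0 := hpmon.ne_zero
  set N := p.natDegree with hN
  have hN1 : 1 ≤ N := minpoly.natDegree_pos hint
  have h0 : ∑ i ∈ Finset.range (N + 1), u (p.coeff i) * g ^ i = 0 := by
    have h := minpoly.aeval (RatFunc k) g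
    rw [Polynomial.aeval_eq_sum_range] at h
    simpa [Algebra.smul_def] using h
  have hterm : ∀ i ∈ Finset.range (N + 1),
      δ (u (p.coeff i) * g ^ i)
        = u (stmt19D (p.coeff i)) * g ^ i
          + u (p.coeff i) * ((i : F) * g ^ (i - 1) * (u RatFunc.X)⁻¹) := by
    intro i _
    rw [Derivation.leibniz, Derivation.leibniz_pow, stmt19_E δ hδX hδC, hg]
    simp only [smul_eq_mul, nsmul_eq_mul]
    ring
  have h1 : ∑ i ∈ Finset.range (N + 1),
      (u (stmt19D (p.coeff i)) * g ^ i
        + u (p.coeff i) * ((i : F) * g ^ (i - 1) * (u RatFunc.X)⁻¹)) = 0 := by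
    rw [← Finset.sum_congr rfl hterm, ← map_sum δ _ _, h0, map_zero]
  have h2 : ∑ i ∈ Finset.range (N + 1),
      (u (RatFunc.X * stmt19D (p.coeff i)) * g ^ i
        + (i : F) * u (p.coeff i) * g ^ (i - 1)) = 0 := by
    have e : ∀ i ∈ Finset.range (N + 1),
        (u (stmt19D (p.coeff i)) * g ^ i
          + u (p.coeff i) * ((i : F) * g ^ (i - 1) * (u RatFunc.X)⁻¹)) * u RatFunc.X
        = u (RatFunc.X * stmt19D (p.coeff i)) * g ^ i
          + (i : F) * u (p.coeff i) * g ^ (i - 1) := by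
      intro i _
      rw [map_mul]
      field_simp
    rw [← Finset.sum_congr rfl e, ← Finset.sum_mul, h1, zero_mul]
  set Q : Polynomial (RatFunc k) :=
    ∑ i ∈ Finset.range (N + 1),
      Polynomial.C (RatFunc.X * stmt19D (p.coeff i) + ((i : RatFunc k) + 1) * p.coeff (i + 1))
        * Polynomial.X ^ i with hQ
  have hQcoeff : ∀ j, Q.coeff j
      = if j < N + 1 then
          RatFunc.X * stmt19D (p.coeff j) + ((j : RatFunc k) + 1) * p.coeff (j + 1)
        else 0 := by
    intro j
    rw [hQ, Polynomial.finset_sum_coeff]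
    simp only [Polynomial.coeff_C_mul, Polynomial.coeff_X_pow, mul_ite, mul_one, mul_zero]
    rw [Finset.sum_ite_eq (Finset.range (N + 1)) j]
    simp [Finset.mem_range]
  have haevQ : Polynomial.aeval g Q = 0 := by
    have key : ∀ i ∈ Finset.range (N + 1),
        (Polynomial.aeval g) (Polynomial.C (RatFunc.X * stmt19D (p.coeff i)
            + ((i : RatFunc k) + 1) * p.coeff (i + 1)) * Polynomial.X ^ i)
        = u (RatFunc.X * stmt19D (p.coeff i)) * g ^ i
          + ((i : F) + 1) * u (p.coeff (i + 1)) * g ^ i := by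
      intro i _
      simp only [map_mul, map_add, map_pow, Polynomial.aeval_C, Polynomial.aeval_X,
        map_natCast, map_one, hu]
      ring
    rw [hQ, map_sum, Finset.sum_congr rfl key, Finset.sum_add_distrib]
    have e2 : ∑ i ∈ Finset.range (N + 1), ((i : F) + 1) * u (p.coeff (i + 1)) * g ^ i
        = ∑ i ∈ Finset.range (N + 1), (i : F) * u (p.coeff i) * g ^ (i - 1) := by
      rw [Finset.sum_range_succ]
      have hc0 : p.coeff (N + 1) = 0 := Polynomial.coeff_natDegree_succ_eq_zero
      rw [hc0]
      simp only [map_zero, mul_zero, zero_mul, add_zero]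
      rw [Finset.sum_range_succ' (fun i => (i : F) * u (p.coeff i) * g ^ (i - 1)) N]
      simp only [Nat.cast_zero, zero_mul, add_zero, Nat.succ_sub_one]
      apply Finset.sum_congr rfl
      intro i _
      push_cast
      ring
    rw [e2, ← Finset.sum_add_distrib]
    exact h2
  have hQ0 : Q = 0 := by
    by_contra hne
    have hdeg : Q.degree < p.degree := by
      rw [Polynomial.degree_eq_natDegree hpne]
      rw [Polynomial.degree_lt_iff_coeff_zero]
      intro m hm
      rw [hQcoeff m]
      rcases eq_or_lt_of_le hm with heq | hlt
      · rw [if_pos (by omega)]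
        rw [← heq]
        rw [show p.coeff N = 1 from hpmon.coeff_natDegree,
          show p.coeff (N + 1) = 0 from Polynomial.coeff_natDegree_succ_eq_zero]
        simp [stmt19D_one]
      · rw [if_neg (by omega)]
    exact absurd (minpoly.degree_le_of_ne_zero (RatFunc k) g hne haevQ) (not_le.mpr hdeg)
  have hc := hQcoeff (N - 1)
  rw [hQ0] at hc
  simp only [Polynomial.coeff_zero] at hc
  rw [if_pos (by omega)] at hc
  rw [show N - 1 + 1 = N by omega, show p.coeff N = 1 from hpmon.coeff_natDegree] at hc
  have hcast : ((N - 1 : ℕ) : RatFunc k) + 1 = (N : RatFunc k) := by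
    rw [Nat.cast_sub hN1]
    ring
  rw [mul_one, hcast] at hc
  exact stmt19_noLog (p.coeff (N - 1)) (-(N : k))
    (neg_ne_zero.mpr (Nat.cast_ne_zero.mpr (by omega)))
    (by rw [map_neg, map_natCast]; linear_combination -hc)

lemma stmt19_key {k F : Type*} [Field k] [CharZero k] [Field F] [CharZero F]
    [Algebra (RatFunc k) F] (halg : Algebra.IsAlgebraic (RatFunc k) F)
    (δ : Derivation ℚ F F)
    (hδX : δ (algebraMap (RatFunc k) F RatFunc.X) = 1)
    (hδC : ∀ c : k, δ (algebraMap (RatFunc k) F (RatFunc.C c)) = 0)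
    (c : F) (hc : δ c = 0) (f : F)
    (hf : δ f = c * (algebraMap (RatFunc k) F RatFunc.X)⁻¹) : c = 0 := by
  by_contra hc0
  refine stmt19_nologF halg δ hδX hδC (f / c) ?_
  rw [Derivation.leibniz_div_const _ _ _ hc, hf]
  rw [smul_eq_mul]
  field_simp

/-- Puiseux-coefficient lemma: let `F` be an algebraic extension of the rational function
field `k(u)` (with `k` of characteristic zero standing for `ℂ(t, y₁)` and
`u = y₁'`), and let `δ` be the derivation `∂/∂y₁'` on `F`, i.e. the extension of `d/du`.
Suppose `a ≠ 0` is a constant (`δ a = 0`), `A : ℕ → F` (with `A k` standing for the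
Puiseux coefficient `A_{-k}`) satisfies: `A 0` does not depend on `y₁'` (`δ (A 0) = 0`),
and for all `k ∈ ℕ`, `(a/2)·δ(A (k+1)) = k·(A k)/y₁'`.  Then `A k = 0` for all `k ≥ 1`.
(The key point is that the derivative of a function algebraic over `k(y₁')` cannot have a
simple pole at `y₁' = 0`.) -/
theorem stmt19 {k F : Type*} [Field k] [CharZero k] [Field F] [CharZero F]
    [Algebra (RatFunc k) F] (halg : Algebra.IsAlgebraic (RatFunc k) F)
    (δ : Derivation ℚ F F)
    (hδX : δ (algebraMap (RatFunc k) F RatFunc.X) = 1)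
    (hδC : ∀ c : k, δ (algebraMap (RatFunc k) F (RatFunc.C c)) = 0)
    (a : F) (ha : a ≠ 0) (haconst : δ a = 0)
    (A : ℕ → F) (hA0 : δ (A 0) = 0)
    (hrec : ∀ m : ℕ, (a / 2) * δ (A (m + 1))
        = (m : F) * A m / algebraMap (RatFunc k) F RatFunc.X) :
    ∀ m : ℕ, 1 ≤ m → A m = 0 := by
  have h2ne : (2 : F) ≠ 0 := two_ne_zero
  have ha2 : a / 2 ≠ 0 := div_ne_zero ha h2ne
  have h2const : δ (2 : F) = 0 := by
    have := Derivation.map_natCast δ (A := F) 2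
    simpa using this
  have ha2const : δ (a / 2) = 0 := by
    rw [Derivation.leibniz_div_const _ _ _ h2const, haconst, smul_zero]
  -- all the coefficients are constants
  have hder : ∀ n : ℕ, δ (A n) = 0 := by
    intro n
    induction n with
    | zero => exact hA0
    | succ n ih =>
      have hcconst : δ ((n : F) * A n) = 0 := by
        rw [Derivation.leibniz, ih, Derivation.map_natCast, smul_zero, smul_zero, add_zero]
      have hf : δ ((a / 2) * A (n + 1))
          = ((n : F) * A n) * (algebraMap (RatFunc k) F RatFunc.X)⁻¹ := by
        rw [Derivation.leibniz, ha2const, smul_zero, add_zero, smul_eq_mul, hrec n,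
          div_eq_mul_inv]
      have hzero := stmt19_key halg δ hδX hδC _ hcconst _ hf
      have h5 : (a / 2) * δ (A (n + 1)) = 0 := by
        rw [hrec n, hzero, zero_div]
      exact (mul_eq_zero.mp h5).resolve_left ha2
  intro m hm
  have h6 : (a / 2) * δ (A (m + 1)) = 0 := by rw [hder (m + 1), mul_zero]
  rw [hrec m] at h6
  have hXF : algebraMap (RatFunc k) F RatFunc.X ≠ 0 := fun h0 =>
    RatFunc.X_ne_zero ((RingHom.injective (algebraMap (RatFunc k) F)) (by simpa using h0))
  have h7 : (m : F) * A m = 0 := by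
    field_simp at h6
    simpa using h6
  have hmne : (m : F) ≠ 0 := Nat.cast_ne_zero.mpr (by omega)
  exact (mul_eq_zero.mp h7).resolve_left hmne
end
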